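/- arXiv:2601.08527 — 3 statements merged into one kernel-verified Lean document; each statement's English description precedes it below -/
import Mathlib

section
/- Let $X_0 \sim \mathcal N(0,I_d)$ and $X_1$ independent, $X_t = tX_1 + (1-t)X_0$, and define the velocity field $u(t,x) = \mathbb E[X_1 - X_0 \mid X_t = x]$. Then for $t \in (0,1)$, $\nabla \log p_{X_t}(x) = \frac{t}{1-t}\,u(t,x) - \frac{1}{1-t}\,x$, where $p_{X_t}$ is the density of $X_t$. -/
/-!
With `v = (1 - t)²`, `p_{X_t}(x) = ∫ g_v(x - t a) p(a) da` for the Gaussian density `g_v`.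
Since `∇g_v(z) = -v⁻¹ g_v(z) z` and both `g_v` and `‖z‖ g_v(z)` are bounded, the gradient may be
taken under the integral sign, which gives Tweedie's formula
`∇ log p_{X_t}(x) = v⁻¹ (t E[X₁ | X_t = x] - x)`; the claimed identity is this formula rewritten in
terms of `u`.
-/

open MeasureTheory

/-- Density of `N(0, v I_d)` on `ℝ^d`. -/
noncomputable def gaussD (d : ℕ) (v : ℝ) (x : EuclideanSpace ℝ (Fin d)) : ℝ :=
  (2 * Real.pi * v) ^ (-(d : ℝ) / 2) * Real.exp (-‖x‖ ^ 2 / (2 * v))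

lemma mul_exp_neg_sq_div_le_max {c : ℝ} (hc : 0 < c) (r : ℝ) :
    r * Real.exp (-(r ^ 2 / c)) ≤ max 1 c := by
  rcases le_or_gt r 1 with hr1 | hr1
  · calc r * Real.exp (-(r ^ 2 / c)) ≤ 1 * 1 :=
          mul_le_mul hr1 (Real.exp_le_one_iff.mpr (neg_nonpos.mpr (by positivity)))
            (by positivity) zero_le_one
      _ ≤ max 1 c := by simp
  · have hr0 : 0 < r := by linarith
    -- `e^s ≥ s` with `s = r²/c`
    have hexp : Real.exp (-(r ^ 2 / c)) ≤ (r ^ 2 / c)⁻¹ := by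
      rw [Real.exp_neg]
      gcongr
      linarith [Real.add_one_le_exp (r ^ 2 / c)]
    calc r * Real.exp (-(r ^ 2 / c)) ≤ r * (r ^ 2 / c)⁻¹ := by gcongr
      _ = c / r := by field_simp
      _ ≤ c := div_le_self hc.le hr1.le
      _ ≤ max 1 c := le_max_right _ _

section gaussD

variable {d : ℕ} {v : ℝ}

lemma gaussD_pos (hv : 0 < v) (x : EuclideanSpace ℝ (Fin d)) : 0 < gaussD d v x := by
  unfold gaussD
  have := Real.pi_pos
  positivity

lemma gaussD_le (hv : 0 < v) (x : EuclideanSpace ℝ (Fin d)) :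
    gaussD d v x ≤ (2 * Real.pi * v) ^ (-(d : ℝ) / 2) := by
  have := Real.pi_pos
  refine mul_le_of_le_one_right (by positivity) (Real.exp_le_one_iff.mpr ?_)
  exact div_nonpos_of_nonpos_of_nonneg (neg_nonpos.mpr (by positivity)) (by positivity)

lemma norm_mul_gaussD_le (hv : 0 < v) (x : EuclideanSpace ℝ (Fin d)) :
    ‖x‖ * gaussD d v x ≤ (2 * Real.pi * v) ^ (-(d : ℝ) / 2) * max 1 (2 * v) := by
  have := Real.pi_pos
  calc ‖x‖ * gaussD d v x
      = (2 * Real.pi * v) ^ (-(d : ℝ) / 2) * (‖x‖ * Real.exp (-(‖x‖ ^ 2 / (2 * v)))) := by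
        rw [gaussD, neg_div (2 * v)]; ring
    _ ≤ _ := by gcongr; exact mul_exp_neg_sq_div_le_max (by positivity) ‖x‖

lemma continuous_gaussD : Continuous (gaussD d v) :=
  continuous_const.mul (((continuous_norm.pow 2).neg.div_const _).rexp)

lemma hasFDerivAt_gaussD (z : EuclideanSpace ℝ (Fin d)) :
    HasFDerivAt (gaussD d v) (innerSL ℝ ((-v⁻¹ * gaussD d v z) • z)) z := by
  have hfun : gaussD d v = fun z : EuclideanSpace ℝ (Fin d) =>
      (2 * Real.pi * v) ^ (-(d : ℝ) / 2) * Real.exp (-(2 * v)⁻¹ * ‖z‖ ^ 2) := by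
    funext w
    rw [gaussD]
    congr 2
    ring
  have h := ((((hasStrictFDerivAt_norm_sq z).hasFDerivAt).const_mul (-(2 * v)⁻¹)).exp).const_mul
    ((2 * Real.pi * v) ^ (-(d : ℝ) / 2))
  rw [hfun]
  refine h.congr_fderiv (ContinuousLinearMap.ext fun w => ?_)
  simp only [FunLike.coe_smul, Pi.smul_apply, innerSL_apply_apply, smul_eq_mul,
    two_smul, add_apply, real_inner_smul_left]
  ring

end gaussD

-- For `v = (1 - t)²` and `μ = volume` this is the paper's `p_{X_t}`, and
-- `gaussConvMoment / gaussConv` is `E[X₁ | X_t = x]`.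
noncomputable def gaussConv (d : ℕ) (v t : ℝ) (p : EuclideanSpace ℝ (Fin d) → ℝ)
    (μ : Measure (EuclideanSpace ℝ (Fin d))) (x : EuclideanSpace ℝ (Fin d)) : ℝ :=
  ∫ a, gaussD d v (x - t • a) * p a ∂μ

noncomputable def gaussConvMoment (d : ℕ) (v t : ℝ) (p : EuclideanSpace ℝ (Fin d) → ℝ)
    (μ : Measure (EuclideanSpace ℝ (Fin d))) (x : EuclideanSpace ℝ (Fin d)) :
    EuclideanSpace ℝ (Fin d) :=
  ∫ a, (gaussD d v (x - t • a) * p a) • a ∂μ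

section gaussConv

variable {d : ℕ} {v t : ℝ} {p : EuclideanSpace ℝ (Fin d) → ℝ}
  {μ : Measure (EuclideanSpace ℝ (Fin d))}

lemma continuous_gaussD_sub_smul (x : EuclideanSpace ℝ (Fin d)) :
    Continuous fun a : EuclideanSpace ℝ (Fin d) => gaussD d v (x - t • a) :=
  continuous_gaussD.comp (continuous_const.sub (continuous_const_smul t))

lemma integrable_gaussConv_integrand (hv : 0 < v) (hp : Integrable p μ)
    (x : EuclideanSpace ℝ (Fin d)) :
    Integrable (fun a => gaussD d v (x - t • a) * p a) μ :=
  hp.bdd_mul (continuous_gaussD_sub_smul x).aestronglyMeasurable <| ae_of_all _ fun a => by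
    rw [Real.norm_of_nonneg (gaussD_pos hv _).le]
    exact gaussD_le hv _

lemma integrable_gaussConv_integrand_smul_sub (hv : 0 < v) (hp : Integrable p μ)
    (x : EuclideanSpace ℝ (Fin d)) :
    Integrable (fun a => (gaussD d v (x - t • a) * p a) • (x - t • a)) μ := by
  have hcont : Continuous fun a => gaussD d v (x - t • a) • (x - t • a) :=
    (continuous_gaussD_sub_smul x).smul (continuous_const.sub (continuous_const_smul t))
  have hbdd := hp.smul_bdd _ hcont.aestronglyMeasurable
    (ae_of_all _ fun a => by
      rw [norm_smul, Real.norm_of_nonneg (gaussD_pos hv _).le, mul_comm]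
      exact norm_mul_gaussD_le hv _)
  refine hbdd.congr (ae_of_all _ fun a => ?_)
  simp only [Pi.smul_apply', mul_comm (gaussD d v _), mul_smul]

lemma integrable_gaussConvMoment_integrand (hv : 0 < v) (ht : t ≠ 0) (hp : Integrable p μ)
    (x : EuclideanSpace ℝ (Fin d)) :
    Integrable (fun a => (gaussD d v (x - t • a) * p a) • a) μ := by
  have h := ((integrable_gaussConv_integrand (t := t) hv hp x).smul_const x).sub
    (integrable_gaussConv_integrand_smul_sub (t := t) hv hp x)
  refine (h.smul t⁻¹).congr (ae_of_all _ fun a => ?_)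
  simp only [Pi.smul_apply, Pi.sub_apply, smul_sub, smul_smul]
  match_scalars
  · ring
  · field_simp

lemma gaussConv_pos (hv : 0 < v) (hp : Integrable p μ) (hp0 : 0 ≤ p)
    (hpos : 0 < ∫ a, p a ∂μ) (x : EuclideanSpace ℝ (Fin d)) : 0 < gaussConv d v t p μ x := by
  rw [integral_pos_iff_support_of_nonneg hp0 hp] at hpos
  rw [gaussConv, integral_pos_iff_support_of_nonneg
    (fun a => mul_nonneg (gaussD_pos hv _).le (hp0 a)) (integrable_gaussConv_integrand hv hp x)]
  convert hpos using 2
  ext a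
  simp [(gaussD_pos hv (x - t • a)).ne']

lemma hasFDerivAt_gaussConv (hv : 0 < v) (hp : Integrable p μ)
    (x : EuclideanSpace ℝ (Fin d)) :
    HasFDerivAt (gaussConv d v t p μ)
      (innerSL ℝ (-v⁻¹ • ∫ a, (gaussD d v (x - t • a) * p a) • (x - t • a) ∂μ)) x := by
  set C := (2 * Real.pi * v) ^ (-(d : ℝ) / 2) * max 1 (2 * v)
  have hderiv : ∀ a y, HasFDerivAt (fun y => gaussD d v (y - t • a) * p a)
      (innerSL ℝ (-v⁻¹ • ((gaussD d v (y - t • a) * p a) • (y - t • a)))) y := by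
    intro a y
    refine (((hasFDerivAt_gaussD (y - t • a)).comp y
      ((hasFDerivAt_id y).sub_const (t • a))).mul_const (p a)).congr_fderiv ?_
    rw [ContinuousLinearMap.comp_id, ← map_smul, smul_smul, smul_smul]
    congr 2
    ring
  have hbound : ∀ a y, ‖innerSL ℝ (-v⁻¹ • ((gaussD d v (y - t • a) * p a) • (y - t • a)))‖
      ≤ v⁻¹ * C * ‖p a‖ := by
    intro a y
    rw [innerSL_apply_norm, norm_smul, norm_smul, norm_mul, norm_neg,
      Real.norm_of_nonneg (inv_nonneg.mpr hv.le), Real.norm_of_nonneg (gaussD_pos hv _).le]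
    have := norm_mul_gaussD_le hv (y - t • a)
    calc v⁻¹ * (gaussD d v (y - t • a) * ‖p a‖ * ‖y - t • a‖)
        = v⁻¹ * (‖y - t • a‖ * gaussD d v (y - t • a)) * ‖p a‖ := by ring
      _ ≤ v⁻¹ * C * ‖p a‖ := by gcongr
  have hint : Integrable (fun a => -v⁻¹ • ((gaussD d v (x - t • a) * p a) • (x - t • a))) μ :=
    (integrable_gaussConv_integrand_smul_sub hv hp x).smul (-v⁻¹)
  have h := hasFDerivAt_integral_of_dominated_of_fderiv_le (μ := μ) (x₀ := x)
    (F := fun y a => gaussD d v (y - t • a) * p a) Filter.univ_mem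
    (.of_forall fun y => (integrable_gaussConv_integrand hv hp y).aestronglyMeasurable)
    (integrable_gaussConv_integrand hv hp x)
    ((innerSL ℝ).continuous.comp_aestronglyMeasurable hint.aestronglyMeasurable)
    (ae_of_all _ fun a y _ => hbound a y) (hp.norm.const_mul _)
    (ae_of_all _ fun a y _ => hderiv a y)
  rwa [ContinuousLinearMap.integral_comp_comm _ hint, integral_smul] at h

lemma integral_gaussConv_integrand_smul_sub (hv : 0 < v) (ht : t ≠ 0) (hp : Integrable p μ)
    (x : EuclideanSpace ℝ (Fin d)) :
    ∫ a, (gaussD d v (x - t • a) * p a) • (x - t • a) ∂μ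
      = gaussConv d v t p μ x • x - t • gaussConvMoment d v t p μ x := by
  have hmoment : Integrable (fun a => t • (gaussD d v (x - t • a) * p a) • a) μ :=
    (integrable_gaussConvMoment_integrand hv ht hp x).smul t
  simp_rw [smul_sub, smul_comm _ t]
  rw [integral_sub ((integrable_gaussConv_integrand hv hp x).smul_const x) hmoment,
    integral_smul_const, integral_smul]
  rfl

lemma hasGradientAt_log_gaussConv (hv : 0 < v) (ht : t ≠ 0) (hp : Integrable p μ)
    {x : EuclideanSpace ℝ (Fin d)} (hx : gaussConv d v t p μ x ≠ 0) :
    HasGradientAt (fun y => Real.log (gaussConv d v t p μ y))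
      (v⁻¹ • (t • (gaussConv d v t p μ x)⁻¹ • gaussConvMoment d v t p μ x - x)) x := by
  rw [hasGradientAt_iff_hasFDerivAt]
  refine ((hasFDerivAt_gaussConv hv hp x).log hx).congr_fderiv
    (ContinuousLinearMap.ext fun w => ?_)
  rw [integral_gaussConv_integrand_smul_sub hv ht hp x]
  simp only [FunLike.coe_smul, Pi.smul_apply, innerSL_apply_apply, smul_eq_mul,
    InnerProductSpace.toDual_apply_apply, real_inner_smul_left, inner_sub_left]
  field_simp
  ring

end gaussConv

theorem stmt_10_general (d : ℕ)
    (pX1 : EuclideanSpace ℝ (Fin d) → ℝ)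
    (hpX10 : ∀ x, 0 ≤ pX1 x) (hpX11 : ∫ x, pX1 x = 1)
    (t : ℝ) (ht : t ∈ Set.Ioo (0 : ℝ) 1)
    (pt : EuclideanSpace ℝ (Fin d) → ℝ)
    (hpt : pt = fun x => ∫ x1, gaussD d ((1 - t) ^ 2) (x - t • x1) * pX1 x1)
    (condMean : EuclideanSpace ℝ (Fin d) → EuclideanSpace ℝ (Fin d))
    (hcm : condMean = fun x =>
      (pt x)⁻¹ • ∫ x1, (gaussD d ((1 - t) ^ 2) (x - t • x1) * pX1 x1) • x1)
    (u : EuclideanSpace ℝ (Fin d) → EuclideanSpace ℝ (Fin d))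
    (hu : u = fun x => -((1 - t)⁻¹ • x) + (1 - t)⁻¹ • condMean x) :
    ∀ x, gradient (fun y => Real.log (pt y)) x
      = (t / (1 - t)) • u x - (1 - t)⁻¹ • x := by
  obtain ⟨ht0, ht1⟩ := ht
  have h1t : 1 - t ≠ 0 := sub_ne_zero.mpr ht1.ne'
  have hv : 0 < (1 - t) ^ 2 := pow_pos (sub_pos.mpr ht1) 2
  have hp : Integrable pX1 := Integrable.of_integral_ne_zero (by rw [hpX11]; exact one_ne_zero)
  replace hpt : pt = gaussConv d ((1 - t) ^ 2) t pX1 volume := hpt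
  replace hcm : condMean = fun x => (pt x)⁻¹ • gaussConvMoment d ((1 - t) ^ 2) t pX1 volume x :=
    hcm
  subst hu hcm hpt
  intro x
  have hpos := gaussConv_pos (t := t) hv hp hpX10 (by rw [hpX11]; exact one_pos) x
  rw [(hasGradientAt_log_gaussConv hv ht0.ne' hp hpos.ne').gradient]
  match_scalars
  · field_simp
  · field_simp
    ring

/-- Score–velocity identity for the linear interpolant `X_t = tX₁ + (1-t)X₀` with Gaussian `X₀`:
`∇log p_{X_t}(x) = (t/(1-t)) u(t,x) - x/(1-t)`, where
`u(t,x) = -x/(1-t) + (1/(1-t)) E[X₁|X_t=x]`. -/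
theorem stmt_10 (d : ℕ)
    (pX1 : EuclideanSpace ℝ (Fin d) → ℝ) (hpX1m : Measurable pX1)
    (hpX10 : ∀ x, 0 ≤ pX1 x) (hpX11 : ∫ x, pX1 x = 1)
    (t : ℝ) (ht : t ∈ Set.Ioo (0 : ℝ) 1)
    (pt : EuclideanSpace ℝ (Fin d) → ℝ)
    (hpt : pt = fun x => ∫ x1, gaussD d ((1 - t) ^ 2) (x - t • x1) * pX1 x1)
    (condMean : EuclideanSpace ℝ (Fin d) → EuclideanSpace ℝ (Fin d))
    (hcm : condMean = fun x =>
      (pt x)⁻¹ • ∫ x1, (gaussD d ((1 - t) ^ 2) (x - t • x1) * pX1 x1) • x1)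
    (u : EuclideanSpace ℝ (Fin d) → EuclideanSpace ℝ (Fin d))
    (hu : u = fun x => -((1 - t)⁻¹ • x) + (1 - t)⁻¹ • condMean x) :
    ∀ x, gradient (fun y => Real.log (pt y)) x
      = (t / (1 - t)) • u x - (1 - t)⁻¹ • x :=
  stmt_10_general d pX1 hpX10 hpX11 t ht pt hpt condMean hcm u hu
end

section
/- Assume $Y$ is supported in the ball $B(0,R) \subset \mathbb R^d$, $X_1 = Y + \sigma\Xi$ with $\Xi \sim \mathcal N(0,I_d)$ independent of $Y$, $X_0 \sim \mathcal N(0,I_d)$ independent of $X_1$, and $X_t = tX_1 + (1-t)X_0$. Then for every $t \in (0,1)$ and $x_t \in \mathbb R^d$, the conditional law of $X_1$ given $X_t = x_t$ equals the law of $\frac{t\sigma_t^2}{(1-t)^2}x_t + \frac{\sigma_t^2}{\sigma^2}Y_t^{x_t} + \sigma_t\Xi'$, where $\sigma_t^2 = \frac{\sigma^2(1-t)^2}{\sigma^2 t^2 + (1-t)^2}$, $\Xi' \sim \mathcal N(0,I_d)$, and $Y_t^{x_t}$ is independent of $\Xi'$ with density proportional to $\gamma_{\sigma^2 t^2 + (1-t)^2}(x_t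 - ty)\,p_Y(y)$. -/
open MeasureTheory RealInnerProductSpace

/-- Decomposition of the conditional law of `X₁` given `X_t = x_t` for `X₁ = Y + σΞ` with `Y`
supported in `B(0,R)`: the (unnormalized) conditional density
`∫ γ_{(1-t)²}(x_t - tx₁)γ_{σ²}(x₁ - y) p_Y(y) dy` equals the (unnormalized) density of
`(tσ_t²/(1-t)²)x_t + (σ_t²/σ²)Y_t^{x_t} + σ_tΞ'`, i.e.
`∫ γ_{σ_t²}(x₁ - (tσ_t²/(1-t)²)x_t - (σ_t²/σ²)y)·γ_{σ²t²+(1-t)²}(x_t - ty) p_Y(y) dy`,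
where `σ_t² = σ²(1-t)²/(σ²t² + (1-t)²)`.  Dividing both sides by `p_{X_t}(x_t)` yields the
claimed equality of the conditional law with the law of the displayed random vector. -/
theorem stmt_14 (d : ℕ) (σ R : ℝ) (hσ : 0 < σ) (hR : 0 < R)
    (pY : EuclideanSpace ℝ (Fin d) → ℝ) (hpYm : Measurable pY)
    (hpY0 : ∀ y, 0 ≤ pY y) (hpY1 : ∫ y, pY y = 1)
    (hsupp : ∀ y, pY y ≠ 0 → ‖y‖ ≤ R)
    (t : ℝ) (ht : t ∈ Set.Ioo (0 : ℝ) 1) (xt : EuclideanSpace ℝ (Fin d))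
    (v0 st2 : ℝ) (hv0 : v0 = σ ^ 2 * t ^ 2 + (1 - t) ^ 2)
    (hst2 : st2 = σ ^ 2 * (1 - t) ^ 2 / v0) :
    ∀ x1 : EuclideanSpace ℝ (Fin d),
      (∫ y, gaussD d ((1 - t) ^ 2) (xt - t • x1) * gaussD d (σ ^ 2) (x1 - y) * pY y)
        = ∫ y, gaussD d st2
              (x1 - (t * st2 / (1 - t) ^ 2) • xt - (st2 / σ ^ 2) • y)
            * (gaussD d v0 (xt - t • y) * pY y) := by
  obtain ⟨ht0, ht1⟩ := ht
  have h1t : 0 < 1 - t := by linarith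
  have hv0' : 0 < v0 := by rw [hv0]; positivity
  have hst2' : 0 < st2 := by rw [hst2]; positivity
  intro x1
  refine integral_congr_ae (Filter.Eventually.of_forall fun y => ?_)
  have hc : (2 * Real.pi * (1 - t) ^ 2) ^ (-(d : ℝ) / 2) * (2 * Real.pi * σ ^ 2) ^ (-(d : ℝ) / 2)
      = (2 * Real.pi * st2) ^ (-(d : ℝ) / 2) * (2 * Real.pi * v0) ^ (-(d : ℝ) / 2) := by
    rw [← Real.mul_rpow (by positivity) (by positivity),
      ← Real.mul_rpow (by positivity) (by positivity)]
    congr 1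
    rw [hst2]
    field_simp
  set p : ℝ := t * st2 / (1 - t) ^ 2 with hp
  set q : ℝ := st2 / σ ^ 2 with hq
  have h1 : ‖xt - t • x1‖ ^ 2
      = ⟪xt, xt⟫ - 2 * t * ⟪xt, x1⟫ + t ^ 2 * ⟪x1, x1⟫ := by
    rw [← real_inner_self_eq_norm_sq]
    simp only [inner_sub_left, inner_sub_right, real_inner_smul_left, real_inner_smul_right]
    rw [real_inner_comm x1 xt]
    ring
  have h2 : ‖x1 - y‖ ^ 2 = ⟪x1, x1⟫ - 2 * ⟪x1, y⟫ + ⟪y, y⟫ := by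
    rw [← real_inner_self_eq_norm_sq]
    simp only [inner_sub_left, inner_sub_right]
    rw [real_inner_comm y x1]
    ring
  have h3 : ‖xt - t • y‖ ^ 2
      = ⟪xt, xt⟫ - 2 * t * ⟪xt, y⟫ + t ^ 2 * ⟪y, y⟫ := by
    rw [← real_inner_self_eq_norm_sq]
    simp only [inner_sub_left, inner_sub_right, real_inner_smul_left, real_inner_smul_right]
    rw [real_inner_comm y xt]
    ring
  have h4 : ‖x1 - p • xt - q • y‖ ^ 2
      = ⟪x1, x1⟫ + p ^ 2 * ⟪xt, xt⟫ + q ^ 2 * ⟪y, y⟫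
        - 2 * p * ⟪xt, x1⟫ - 2 * q * ⟪x1, y⟫ + 2 * p * q * ⟪xt, y⟫ := by
    rw [← real_inner_self_eq_norm_sq]
    simp only [inner_sub_left, inner_sub_right, real_inner_smul_left, real_inner_smul_right]
    rw [real_inner_comm x1 xt, real_inner_comm y xt, real_inner_comm y x1]
    ring
  have he : Real.exp (-‖xt - t • x1‖ ^ 2 / (2 * (1 - t) ^ 2))
        * Real.exp (-‖x1 - y‖ ^ 2 / (2 * σ ^ 2))
      = Real.exp (-‖x1 - p • xt - q • y‖ ^ 2 / (2 * st2))
        * Real.exp (-‖xt - t • y‖ ^ 2 / (2 * v0)) := by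
    rw [← Real.exp_add, ← Real.exp_add]
    congr 1
    rw [h1, h2, h3, h4, hp, hq, hst2, hv0]
    have hσ' : σ ^ 2 ≠ 0 := by positivity
    have hv0'' : σ ^ 2 * t ^ 2 + (1 - t) ^ 2 ≠ 0 := by positivity
    have h1t' : (1 - t) ^ 2 ≠ 0 := by positivity
    rw [hv0] at hv0'
    field_simp
    ring
  unfold gaussD
  calc ((2 * Real.pi * (1 - t) ^ 2) ^ (-(d : ℝ) / 2)
          * Real.exp (-‖xt - t • x1‖ ^ 2 / (2 * (1 - t) ^ 2)))
        * ((2 * Real.pi * σ ^ 2) ^ (-(d : ℝ) / 2)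
          * Real.exp (-‖x1 - y‖ ^ 2 / (2 * σ ^ 2))) * pY y
      = ((2 * Real.pi * (1 - t) ^ 2) ^ (-(d : ℝ) / 2) * (2 * Real.pi * σ ^ 2) ^ (-(d : ℝ) / 2))
        * (Real.exp (-‖xt - t • x1‖ ^ 2 / (2 * (1 - t) ^ 2))
          * Real.exp (-‖x1 - y‖ ^ 2 / (2 * σ ^ 2))) * pY y := by ring
    _ = ((2 * Real.pi * st2) ^ (-(d : ℝ) / 2) * (2 * Real.pi * v0) ^ (-(d : ℝ) / 2))
        * (Real.exp (-‖x1 - p • xt - q • y‖ ^ 2 / (2 * st2))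
          * Real.exp (-‖xt - t • y‖ ^ 2 / (2 * v0))) * pY y := by rw [hc, he]
    _ = (2 * Real.pi * st2) ^ (-(d : ℝ) / 2)
          * Real.exp (-‖x1 - p • xt - q • y‖ ^ 2 / (2 * st2))
        * ((2 * Real.pi * v0) ^ (-(d : ℝ) / 2)
          * Real.exp (-‖xt - t • y‖ ^ 2 / (2 * v0)) * pY y) := by ring
end

section
/- Let $\alpha, \beta : [0,1] \to \mathbb R$ be differentiable with $\alpha_t, \beta_t \ne 0$ for $t \in (0,1)$, and let $X_t = \alpha_t X_0 + \beta_t X_1$ with $X_0, X_1$ independent. Then the conditional expectation of the time derivative satisfies $\mathbb E[\dot X_t \mid X_t = x] = \frac{\dot\alpha_t}{\alpha_t}x + \Big(\dot\beta_t - \frac{\dot\alpha_t\beta_t}{\alpha_t}\Big)\mathbb E[X_1 \mid X_t = x]$, where $\dot X_t = \dot\alpha_t X_0 + \dot\beta_t X_1$. -/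
open MeasureTheory ProbabilityTheory

/-! Since `α_t ≠ 0`, the velocity `α̇_t X₀ + β̇_t X₁` is the combination
`(α̇_t/α_t) X_t + (β̇_t - α̇_tβ_t/α_t) X₁` of `X_t` and `X₁`. Conditional expectation given
`σ(X_t)` is linear and fixes the `σ(X_t)`-measurable `X_t`, which gives the identity. -/

theorem smul_add_smul_eq_div_smul_add_smul {E : Type*} [AddCommGroup E] [Module ℝ E]
    {a b : ℝ} (ha : a ≠ 0) (a' b' : ℝ) (x y : E) :
    a' • x + b' • y = (a' / a) • (a • x + b • y) + (b' - a' * b / a) • y := by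
  simp only [smul_add, smul_smul]
  match_scalars
  · field_simp
  · field_simp
    ring

section CondExp

variable {Ω E : Type*} {m m₀ : MeasurableSpace Ω} {μ : Measure Ω}
  [NormedAddCommGroup E] [NormedSpace ℝ E] [CompleteSpace E]

theorem condExp_smul_add_smul_of_stronglyMeasurable (hm : m ≤ m₀) [SigmaFinite (μ.trim hm)]
    {Z W : Ω → E} (hZ : StronglyMeasurable[m] Z) (hZint : Integrable Z μ)
    (hWint : Integrable W μ) (a b : ℝ) :
    μ[fun ω => a • Z ω + b • W ω | m] =ᵐ[μ] fun ω => a • Z ω + b • μ[W | m] ω := by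
  have hlin : μ[a • Z + b • W | m] =ᵐ[μ] a • μ[Z | m] + b • μ[W | m] :=
    (condExp_add (hZint.smul a) (hWint.smul b) m).trans
      ((condExp_smul a Z m).add (condExp_smul b W m))
  rw [condExp_of_stronglyMeasurable hm hZ hZint] at hlin
  exact hlin

end CondExp

/-- For the interpolant `X_t = α_t X₀ + β_t X₁` with `X₀, X₁` independent and
`α_t, β_t ≠ 0`, the conditional expectation of `Ẋ_t = α̇_t X₀ + β̇_t X₁` given `X_t`
satisfies `E[Ẋ_t | X_t] = (α̇_t/α_t)X_t + (β̇_t - α̇_tβ_t/α_t)E[X₁ | X_t]`. -/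
theorem stmt_19 (d : ℕ) (Ω : Type*) [MeasurableSpace Ω] (μ : Measure Ω)
    [IsProbabilityMeasure μ]
    (X0 X1 : Ω → EuclideanSpace ℝ (Fin d))
    (hX0 : Measurable X0) (hX1 : Measurable X1)
    (hX0int : Integrable X0 μ) (hX1int : Integrable X1 μ)
    (hindep : IndepFun X0 X1 μ)
    (α β : ℝ → ℝ) (t : ℝ) (ht : t ∈ Set.Ioo (0 : ℝ) 1)
    (hα : DifferentiableAt ℝ α t) (hβ : DifferentiableAt ℝ β t)
    (hαt : α t ≠ 0) (hβt : β t ≠ 0)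
    (Xt : Ω → EuclideanSpace ℝ (Fin d)) (hXt : Xt = fun ω => α t • X0 ω + β t • X1 ω)
    (mXt : MeasurableSpace Ω)
    (hmXt : mXt = MeasurableSpace.comap Xt inferInstance) :
    ∀ᵐ ω ∂μ,
      (μ[fun ω' => deriv α t • X0 ω' + deriv β t • X1 ω' | mXt]) ω
        = (deriv α t / α t) • Xt ω
          + (deriv β t - deriv α t * β t / α t) • (μ[X1 | mXt]) ω := by
  subst hmXt
  have hXt_meas : Measurable Xt := hXt ▸ (hX0.const_smul (α t)).add (hX1.const_smul (β t))
  have hXt_int : Integrable Xt μ := hXt ▸ (hX0int.smul (α t)).add (hX1int.smul (β t))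
  have hXt_sm : StronglyMeasurable[MeasurableSpace.comap Xt inferInstance] Xt :=
    (Measurable.of_comap_le le_rfl).stronglyMeasurable
  have hvel : (fun ω => deriv α t • X0 ω + deriv β t • X1 ω)
      = fun ω => (deriv α t / α t) • Xt ω + (deriv β t - deriv α t * β t / α t) • X1 ω := by
    funext ω
    rw [hXt]
    exact smul_add_smul_eq_div_smul_add_smul hαt _ _ _ _
  rw [hvel]
  exact condExp_smul_add_smul_of_stronglyMeasurable hXt_meas.comap_le hXt_sm hXt_int hX1int _ _
end
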